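/- Suppose there exist weights w : Fin n → ℤ with at least 2^{0.997n} distinct subset sums and a value x attained by more than 2^{0.4996n} subsets. Then there exists a uniquely decodable code pair (A,B) in {0,1}^n with |A| ≥ 2^{0.997n} and |B| > 2^{0.4996n}. -/

import Mathlib

/-!
Choose one subset for every subset sum; their indicator vectors form a set `A` on which the
weight functional `v ↦ w ⬝ᵥ v` is injective, of size the number of subset sums. Let `B` be the
indicator vectors of the subsets in the largest bin, on which the functional is constant. Then
`a + b` determines `w ⬝ᵥ a`, hence `a`, hence `b`, so `(A, B)` is uniquely decodable.
-/

open Pointwise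

def binOf {n : ℕ} (w : Fin n → ℤ) (S : Finset (Fin n)) (x : ℤ) : ℕ :=
  (S.powerset.filter (fun X => ∑ i ∈ X, w i = x)).card

def sumsOf {n : ℕ} (w : Fin n → ℤ) (S : Finset (Fin n)) : Finset ℤ :=
  S.powerset.image (fun Y => ∑ i ∈ Y, w i)

open Finset

theorem Finset.card_add_eq_mul_of_injOn_of_eq_const {G H : Type*} [AddMonoid G]
    [IsLeftCancelAdd G] [DecidableEq G] [AddMonoid H] [IsRightCancelAdd H] (f : G →+ H)
    {A B : Finset G} (hA : Set.InjOn f A) {c : H} (hB : ∀ b ∈ B, f b = c) :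
    #(A + B) = #A * #B := by
  refine card_add_iff.2 ?_
  rintro ⟨a, b⟩ ⟨ha, hb⟩ ⟨a', b'⟩ ⟨ha', hb'⟩ (h : a + b = a' + b')
  have hfa : f a = f a' := by
    simpa [hB b hb, hB b' hb'] using congrArg f h
  obtain rfl : a = a' := hA ha ha' hfa
  rw [add_left_cancel h]

def indicatorVec {n : ℕ} (S : Finset (Fin n)) : Fin n → ℤ := fun i => if i ∈ S then 1 else 0

lemma indicatorVec_apply_eq_zero_or_one {n : ℕ} (S : Finset (Fin n)) (i : Fin n) :
    indicatorVec S i = 0 ∨ indicatorVec S i = 1 := by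
  unfold indicatorVec; split_ifs <;> simp

lemma indicatorVec_injective {n : ℕ} : Function.Injective (indicatorVec (n := n)) := by
  intro S T h
  ext i
  have hi := congrFun h i
  by_cases hS : i ∈ S <;> by_cases hT : i ∈ T <;> simp_all [indicatorVec]

lemma dotProduct_indicatorVec {n : ℕ} (w : Fin n → ℤ) (S : Finset (Fin n)) :
    w ⬝ᵥ indicatorVec S = ∑ i ∈ S, w i := by
  simp [dotProduct, indicatorVec, mul_ite, sum_ite_mem]

theorem stmt17 {n : ℕ} (w : Fin n → ℤ)
    (hsums : (2 : ℝ) ^ ((0.997 : ℝ) * n) ≤ ((sumsOf w Finset.univ).card : ℝ))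
    (hbin : ∃ x : ℤ, (2 : ℝ) ^ ((0.4996 : ℝ) * n) < (binOf w Finset.univ x : ℝ)) :
    ∃ A B : Finset (Fin n → ℤ),
      (∀ v ∈ A, ∀ i, v i = 0 ∨ v i = 1) ∧ (∀ v ∈ B, ∀ i, v i = 0 ∨ v i = 1) ∧
      (A + B).card = A.card * B.card ∧
      (2 : ℝ) ^ ((0.997 : ℝ) * n) ≤ (A.card : ℝ) ∧
      (2 : ℝ) ^ ((0.4996 : ℝ) * n) < (B.card : ℝ) := by
  obtain ⟨x, hx⟩ := hbin
  let σ : Finset (Fin n) → ℤ := fun Y => ∑ i ∈ Y, w i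
  obtain ⟨T, -, hTinj, hTsums⟩ := exists_subset_injOn_image_eq_of_surjOn (f := σ)
    ((univ.powerset : Finset (Finset (Fin n))) : Set _) (sumsOf w univ)
    (by rw [sumsOf, coe_image]; exact Set.surjOn_image _ _)
  let A := T.image indicatorVec
  let B := (univ.powerset.filter (σ · = x)).image indicatorVec
  have hA : Set.InjOn (w ⬝ᵥ ·) A := by
    simp only [A, coe_image, Set.InjOn, Set.forall_mem_image, dotProduct_indicatorVec]
    exact fun S hS S' hS' h => congrArg indicatorVec (hTinj hS hS' h)
  have hB : ∀ b ∈ B, w ⬝ᵥ b = x := by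
    simp +contextual [B, dotProduct_indicatorVec, σ]
  refine ⟨A, B, ?_, ?_, card_add_eq_mul_of_injOn_of_eq_const
    (AddMonoidHom.mk' (w ⬝ᵥ ·) (dotProduct_add w)) hA hB, ?_, ?_⟩
  · simp [A, indicatorVec_apply_eq_zero_or_one]
  · simp [B, indicatorVec_apply_eq_zero_or_one]
  · rwa [card_image_of_injective _ indicatorVec_injective, ← card_image_of_injOn hTinj, hTsums]
  · rwa [card_image_of_injective _ indicatorVec_injective]
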